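/- arXiv:0809.0259 — 5 statements merged into one kernel-verified Lean document; each statement's English description precedes it below -/
import Mathlib

section
/- Let G be a finite simple graph and let S be a local maximum stable set of G (i.e., S is a maximum stable set of the subgraph of G induced by N[S]). Then there exists a maximum stable set T of G with S ⊆ T. -/
open Finset
open scoped Classical

/-- `S` is a stable (independent) set of `G`. -/
def IsStableSet {V : Type*} (G : SimpleGraph V) (S : Finset V) : Prop :=
  ∀ u ∈ S, ∀ v ∈ S, ¬ G.Adj u v

/-- `S` is a maximum stable set of `G`. -/
def IsMaxStableSet {V : Type*} [Fintype V] (G : SimpleGraph V) (S : Finset V) : Prop :=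
  IsStableSet G S ∧ ∀ T : Finset V, IsStableSet G T → T.card ≤ S.card

/-- The closed neighborhood `N[S]` of a set `S` of vertices of `G`. -/
noncomputable def closedNbhd {V : Type*} [Fintype V] (G : SimpleGraph V) (S : Finset V) :
    Finset V :=
  S ∪ Finset.univ.filter (fun v => ∃ u ∈ S, G.Adj u v)

/-- `S` is a local maximum stable set of `G`: it is a maximum stable set of the subgraph
of `G` induced by `N[S]`, i.e. it is stable and no stable set contained in `N[S]` is larger. -/
def IsLocalMaxStableSet {V : Type*} [Fintype V] (G : SimpleGraph V) (S : Finset V) : Prop :=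
  IsStableSet G S ∧
    ∀ T : Finset V, IsStableSet G T → T ⊆ closedNbhd G S → T.card ≤ S.card

/-- `M` is a matching of `G`: a set of pairwise disjoint edges of `G`. -/
def IsMatching {V : Type*} (G : SimpleGraph V) (M : Finset (Sym2 V)) : Prop :=
  (∀ e ∈ M, e ∈ G.edgeSet) ∧
    ∀ e ∈ M, ∀ f ∈ M, e ≠ f → ∀ v : V, v ∈ e → v ∉ f

/-- `M` is a maximum matching of `G`. -/
def IsMaxMatching {V : Type*} [Fintype V] (G : SimpleGraph V) (M : Finset (Sym2 V)) : Prop :=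
  IsMatching G M ∧ ∀ N : Finset (Sym2 V), IsMatching G N → N.card ≤ M.card

/-- `M` is a matching of the subgraph of `G` induced by the vertex set `A`, i.e. a matching
of `G` all of whose edges have both endpoints in `A`. -/
def IsMatchingOn {V : Type*} (G : SimpleGraph V) (A : Finset V) (M : Finset (Sym2 V)) : Prop :=
  IsMatching G M ∧ ∀ e ∈ M, ∀ v : V, v ∈ e → v ∈ A

/-- `M` is a maximum matching of the subgraph of `G` induced by `A`. -/
def IsMaxMatchingOn {V : Type*} [Fintype V] (G : SimpleGraph V) (A : Finset V)
    (M : Finset (Sym2 V)) : Prop :=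
  IsMatchingOn G A M ∧ ∀ N : Finset (Sym2 V), IsMatchingOn G A N → N.card ≤ M.card

/-- The stability number `α` of the subgraph of `G` induced by `A`. -/
noncomputable def stabNumOn {V : Type*} [Fintype V] (G : SimpleGraph V) (A : Finset V) : ℕ :=
  sSup {n | ∃ S : Finset V, S ⊆ A ∧ IsStableSet G S ∧ S.card = n}

/-- The matching number `μ` of the subgraph of `G` induced by `A`. -/
noncomputable def matchNumOn {V : Type*} [Fintype V] (G : SimpleGraph V) (A : Finset V) : ℕ :=
  sSup {n | ∃ M : Finset (Sym2 V), IsMatchingOn G A M ∧ M.card = n}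

/-- The stability number `α(G)`. -/
noncomputable def stabNum {V : Type*} [Fintype V] (G : SimpleGraph V) : ℕ :=
  stabNumOn G Finset.univ

/-- The matching number `μ(G)`. -/
noncomputable def matchNum {V : Type*} [Fintype V] (G : SimpleGraph V) : ℕ :=
  matchNumOn G Finset.univ

/-- `G` is a König–Egerváry graph: `α(G) + μ(G) = |V(G)|`. -/
def IsKonigEgervary {V : Type*} [Fintype V] (G : SimpleGraph V) : Prop :=
  stabNum G + matchNum G = Fintype.card V

/-- The subgraph of `G` induced by `A` is a König–Egerváry graph:
`α(G[A]) + μ(G[A]) = |A|`. -/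
def IsKonigEgervaryOn {V : Type*} [Fintype V] (G : SimpleGraph V) (A : Finset V) : Prop :=
  stabNumOn G A + matchNumOn G A = A.card

/-!
Exchange argument: for a maximum stable set `T`, the set `S ∪ (T \ N[S])` is stable, because no
vertex outside `N[S]` is adjacent to `S`, and it is at least as large as `T`, because `T ∩ N[S]`
is a stable set inside `N[S]` and so has at most `|S|` elements by local maximality.
-/

theorem IsStableSet.mono {V : Type*} {G : SimpleGraph V} {S T : Finset V}
    (hS : IsStableSet G S) (hTS : T ⊆ S) : IsStableSet G T :=
  fun u hu v hv => hS u (hTS hu) v (hTS hv)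

theorem exists_isMaxStableSet {V : Type*} [Fintype V] (G : SimpleGraph V) :
    ∃ T : Finset V, IsMaxStableSet G T := by
  obtain ⟨T, hT, hmax⟩ := Finset.exists_max_image ({T | IsStableSet G T} : Finset (Finset V))
    Finset.card ⟨∅, mem_filter.mpr ⟨mem_univ _, by simp [IsStableSet]⟩⟩
  exact ⟨T, (mem_filter.mp hT).2, fun U hU => hmax U (mem_filter.mpr ⟨mem_univ U, hU⟩)⟩

section closedNbhd

variable {V : Type*} [Fintype V] {G : SimpleGraph V} {S : Finset V}

theorem subset_closedNbhd : S ⊆ closedNbhd G S := subset_union_left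

theorem mem_closedNbhd_of_adj {u v : V} (hu : u ∈ S) (huv : G.Adj u v) :
    v ∈ closedNbhd G S :=
  mem_union_right _ (mem_filter.mpr ⟨mem_univ v, u, hu, huv⟩)

theorem IsStableSet.union_sdiff_closedNbhd (hS : IsStableSet G S) {T : Finset V}
    (hT : IsStableSet G T) : IsStableSet G (S ∪ (T \ closedNbhd G S)) := by
  intro u hu v hv huv
  rcases mem_union.mp hu with hu | hu <;> rcases mem_union.mp hv with hv | hv
  · exact hS u hu v hv huv
  · exact (mem_sdiff.mp hv).2 (mem_closedNbhd_of_adj hu huv)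
  · exact (mem_sdiff.mp hu).2 (mem_closedNbhd_of_adj hv huv.symm)
  · exact hT u (mem_sdiff.mp hu).1 v (mem_sdiff.mp hv).1 huv

theorem IsLocalMaxStableSet.card_le_card_union_sdiff_closedNbhd
    (hS : IsLocalMaxStableSet G S) {T : Finset V} (hT : IsStableSet G T) :
    T.card ≤ (S ∪ (T \ closedNbhd G S)).card := by
  have hinside : (T ∩ closedNbhd G S).card ≤ S.card :=
    hS.2 _ (hT.mono inter_subset_left) inter_subset_right
  have hdisj : Disjoint S (T \ closedNbhd G S) :=
    disjoint_left.mpr fun _ hx hx' => (mem_sdiff.mp hx').2 (subset_closedNbhd hx)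
  calc T.card = (T ∩ closedNbhd G S).card + (T \ closedNbhd G S).card :=
        (card_inter_add_card_sdiff T _).symm
    _ ≤ S.card + (T \ closedNbhd G S).card := Nat.add_le_add_right hinside _
    _ = (S ∪ (T \ closedNbhd G S)).card := (card_union_of_disjoint hdisj).symm

end closedNbhd

/-- Nemhauser–Trotter: every local maximum stable set of a graph is a subset
of a maximum stable set. -/
theorem localMaxStable_subset_maxStable {V : Type*} [Fintype V]
    (G : SimpleGraph V) (S : Finset V) (hS : IsLocalMaxStableSet G S) :
    ∃ T : Finset V, IsMaxStableSet G T ∧ S ⊆ T := by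
  obtain ⟨T, hTstable, hTmax⟩ := exists_isMaxStableSet G
  refine ⟨S ∪ (T \ closedNbhd G S), ⟨hS.1.union_sdiff_closedNbhd hTstable, fun U hU => ?_⟩,
    subset_union_left⟩
  exact (hTmax U hU).trans (hS.card_le_card_union_sdiff_closedNbhd hTstable)
end

section
/- Let G be a finite simple König–Egerváry graph, let M be a maximum matching of G, and let S be a maximum stable set of G. Then every edge of M joins a vertex of S to a vertex of V(G) − S (i.e., M ⊆ (S, V(G) − S)), and |M| = |V(G) − S|. -/
open Finset
open scoped Classical

/-- in a König–Egerváry graph `G`, every maximum matching `M` is contained in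
`(S, V(G) - S)` for every maximum stable set `S`, and `|M| = |V(G) - S|`. -/
theorem maxMatching_of_konigEgervary {V : Type*} [Fintype V] [DecidableEq V]
    (G : SimpleGraph V) (hKE : IsKonigEgervary G)
    (M : Finset (Sym2 V)) (hM : IsMaxMatching G M)
    (S : Finset V) (hS : IsMaxStableSet G S) :
    (∀ e ∈ M, ∃ u ∈ S, ∃ v ∈ Finset.univ \ S, e = s(u, v)) ∧
      M.card = (Finset.univ \ S).card := by
  classical
  obtain ⟨⟨hMedge, hMdisj⟩, hMmax⟩ := hM
  obtain ⟨hSstable, hSmax⟩ := hS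
  have hstab : stabNum G = S.card := by
    apply le_antisymm
    · refine csSup_le ⟨S.card, S, Finset.subset_univ S, hSstable, rfl⟩ ?_
      rintro n ⟨T, -, hT, rfl⟩
      exact hSmax T hT
    · exact le_csSup ⟨S.card, by rintro n ⟨T, -, hT, rfl⟩; exact hSmax T hT⟩
        ⟨S, Finset.subset_univ S, hSstable, rfl⟩
  have hMon : IsMatchingOn G Finset.univ M := ⟨⟨hMedge, hMdisj⟩, fun e _ v _ => Finset.mem_univ v⟩
  have hmatch : matchNum G = M.card := by
    apply le_antisymm
    · refine csSup_le ⟨M.card, M, hMon, rfl⟩ ?_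
      rintro n ⟨N, ⟨hN, -⟩, rfl⟩
      exact hMmax N hN
    · exact le_csSup ⟨M.card, by rintro n ⟨N, ⟨hN, -⟩, rfl⟩; exact hMmax N hN⟩ ⟨M, hMon, rfl⟩
  have hcard : M.card = (Finset.univ \ S).card := by
    have h1 : (Finset.univ \ S).card = Fintype.card V - S.card := by
      rw [Finset.card_sdiff_of_subset (Finset.subset_univ S), Finset.card_univ]
    have hle : S.card ≤ Fintype.card V := Finset.card_le_univ S
    unfold IsKonigEgervary at hKE
    rw [hstab, hmatch] at hKE
    omega
  set T : Finset V := Finset.univ \ S with hT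
  set f : Sym2 V → Finset V := fun e => T.filter (· ∈ e) with hf
  have hsub : M.biUnion f ⊆ T := by
    intro v hv
    obtain ⟨e, -, hv⟩ := Finset.mem_biUnion.mp hv
    exact (Finset.mem_filter.mp hv).1
  have hdisj : (M : Set (Sym2 V)).Pairwise fun e e' => Disjoint (f e) (f e') := by
    intro e he e' he' hne
    rw [Finset.disjoint_left]
    intro v hv hv'
    exact hMdisj e he e' he' hne v (Finset.mem_filter.mp hv).2 (Finset.mem_filter.mp hv').2
  have hone : ∀ e ∈ M, 1 ≤ (f e).card := by
    intro e he
    have hE := hMedge e he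
    induction e using Sym2.ind with
    | _ a b =>
      rw [SimpleGraph.mem_edgeSet] at hE
      have hnotboth : a ∉ S ∨ b ∉ S := by
        by_contra h
        push_neg at h
        exact hSstable a h.1 b h.2 hE
      rcases hnotboth with h | h
      · refine Finset.card_pos.mpr ⟨a, Finset.mem_filter.mpr ⟨?_, ?_⟩⟩
        · simp [hT, h]
        · simp
      · refine Finset.card_pos.mpr ⟨b, Finset.mem_filter.mpr ⟨?_, ?_⟩⟩
        · simp [hT, h]
        · simp
  have hsum : ∑ e ∈ M, (f e).card = M.card := by
    have h1 : ∑ e ∈ M, (f e).card = (M.biUnion f).card := (Finset.card_biUnion hdisj).symm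
    have h2 : (M.biUnion f).card ≤ T.card := Finset.card_le_card hsub
    have h3 : M.card ≤ ∑ e ∈ M, (f e).card := by
      calc M.card = ∑ _e ∈ M, 1 := by simp
        _ ≤ ∑ e ∈ M, (f e).card := Finset.sum_le_sum hone
    omega
  have hexact : ∀ e ∈ M, (f e).card = 1 := by
    intro e he
    by_contra h
    have h2 : 1 < (f e).card := lt_of_le_of_ne (hone e he) (Ne.symm h)
    have : ∑ _e ∈ M, 1 < ∑ e ∈ M, (f e).card :=
      Finset.sum_lt_sum hone ⟨e, he, h2⟩
    simp [hsum] at this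
  refine ⟨?_, hcard⟩
  intro e he
  have hE := hMedge e he
  have hc := hexact e he
  induction e using Sym2.ind with
  | _ a b =>
    rw [SimpleGraph.mem_edgeSet] at hE
    have hab : a ≠ b := hE.ne
    have hnot2 : ¬ (a ∈ T ∧ b ∈ T) := by
      rintro ⟨ha, hb⟩
      have : {a, b} ⊆ f s(a, b) := by
        intro v hv
        rcases Finset.mem_insert.mp hv with rfl | hv
        · exact Finset.mem_filter.mpr ⟨ha, by simp⟩
        · rw [Finset.mem_singleton] at hv; subst hv
          exact Finset.mem_filter.mpr ⟨hb, by simp⟩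
      have := Finset.card_le_card this
      rw [Finset.card_pair hab] at this
      omega
    have hnot0 : a ∈ T ∨ b ∈ T := by
      by_contra h
      push_neg at h
      simp only [hT, Finset.mem_sdiff, Finset.mem_univ, true_and, not_not] at h
      exact hSstable a h.1 b h.2 hE
    rcases hnot0 with ha | hb
    · have hbS : b ∈ S := by
        by_contra hb
        exact hnot2 ⟨ha, by simp [hT, hb]⟩
      exact ⟨b, hbS, a, ha, Sym2.eq_swap⟩
    · have haS : a ∈ S := by
        by_contra ha
        exact hnot2 ⟨by simp [hT, ha], hb⟩
      exact ⟨a, haS, b, hb, rfl⟩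
end

section
/- Let G be a finite simple graph, let S be a local maximum stable set of G, let H be the subgraph of G induced by N[S], and suppose H is a König–Egerváry graph. If M is a maximum matching of H, then M, regarded as a set of vertices of the line graph L(G), is a local maximum stable set of L(G). -/
open Finset
open scoped Classical

/-- if `S` is a local maximum stable set of `G`, the subgraph `H` of `G`
induced by `N[S]` is a König–Egerváry graph, and `M` is a maximum matching of `H`, then `M`,
regarded as a set of vertices of the line graph `L(G)`, is a local maximum stable set
of `L(G)`. -/
theorem maxMatching_is_localMaxStable_lineGraph {V : Type*} [Fintype V]
    (G : SimpleGraph V) (S : Finset V)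
    (hS : IsLocalMaxStableSet G S)
    (hKE : IsKonigEgervaryOn G (closedNbhd G S))
    (M : Finset (Sym2 V)) (hM : IsMaxMatchingOn G (closedNbhd G S) M) :
    IsLocalMaxStableSet G.lineGraph
      (Finset.univ.filter (fun e : G.edgeSet => (e : Sym2 V) ∈ M)) := by
  classical
  set A := closedNbhd G S with hA
  set NS : Finset V := Finset.univ.filter (fun v => ∃ u ∈ S, G.Adj u v) with hNS
  set M' : Finset G.edgeSet := Finset.univ.filter (fun e : G.edgeSet => (e : Sym2 V) ∈ M)
    with hM'
  -- basic facts
  have hMmatch := hM.1.1.1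
  have hMA : ∀ e ∈ M, ∀ v : V, v ∈ e → v ∈ A := hM.1.2
  -- S and NS are disjoint
  have hdisj : Disjoint S NS := by
    rw [Finset.disjoint_left]
    intro v hvS hvNS
    rw [hNS, Finset.mem_filter] at hvNS
    obtain ⟨-, u, huS, hadj⟩ := hvNS
    exact hS.1 u huS v hvS hadj
  have hAcard : A.card = S.card + NS.card := by
    rw [hA]; exact Finset.card_union_of_disjoint hdisj
  -- stabNumOn G A = S.card
  have hstab : stabNumOn G A = S.card := by
    have hmem : S.card ∈ {n | ∃ T : Finset V, T ⊆ A ∧ IsStableSet G T ∧ T.card = n} :=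
      ⟨S, Finset.subset_union_left, hS.1, rfl⟩
    have hbd : ∀ n ∈ {n | ∃ T : Finset V, T ⊆ A ∧ IsStableSet G T ∧ T.card = n},
        n ≤ S.card := by
      rintro n ⟨T, hTA, hTst, rfl⟩
      exact hS.2 T hTst hTA
    exact le_antisymm (csSup_le ⟨S.card, hmem⟩ hbd) (le_csSup ⟨S.card, hbd⟩ hmem)
  -- matchNumOn G A = M.card
  have hmatch : matchNumOn G A = M.card := by
    have hmem : M.card ∈ {n | ∃ N : Finset (Sym2 V), IsMatchingOn G A N ∧ N.card = n} :=
      ⟨M, hM.1, rfl⟩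
    have hbd : ∀ n ∈ {n | ∃ N : Finset (Sym2 V), IsMatchingOn G A N ∧ N.card = n},
        n ≤ M.card := by
      rintro n ⟨N, hN, rfl⟩
      exact hM.2 N hN
    exact le_antisymm (csSup_le ⟨M.card, hmem⟩ hbd) (le_csSup ⟨M.card, hbd⟩ hmem)
  have hMNS : M.card = NS.card := by
    have := hKE
    rw [IsKonigEgervaryOn, hstab, hmatch, hAcard] at this
    exact Nat.add_left_cancel this
  -- |M'| = |M|
  have hM'card : M'.card = M.card := by
    have himg : M'.image (fun e : G.edgeSet => (e : Sym2 V)) = M := by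
      ext x
      simp only [Finset.mem_image, hM', Finset.mem_filter, Finset.mem_univ, true_and]
      constructor
      · rintro ⟨e, he, rfl⟩; exact he
      · intro hx; exact ⟨⟨x, hMmatch x hx⟩, hx, rfl⟩
    calc M'.card = (M'.image (fun e : G.edgeSet => (e : Sym2 V))).card :=
          (Finset.card_image_of_injective _ Subtype.coe_injective).symm
      _ = M.card := by rw [himg]
  -- every edge meeting S has its other endpoint in NS; key claim:
  have memNS : ∀ u ∈ S, ∀ w : V, G.Adj u w → w ∈ NS := by
    intro u huS w hadj
    rw [hNS, Finset.mem_filter]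
    exact ⟨Finset.mem_univ _, u, huS, hadj⟩
  have key : ∀ e : G.edgeSet, e ∈ closedNbhd G.lineGraph M' →
      ∃ v, v ∈ NS ∧ v ∈ (e : Sym2 V) := by
    intro e he
    -- helper: an edge of G with a designated endpoint u ∈ S has the other endpoint in NS
    have aux : ∀ e' : G.edgeSet, ∀ u : V, u ∈ (e' : Sym2 V) → u ∈ S →
        ∃ v, v ∈ NS ∧ v ∈ (e' : Sym2 V) := by
      rintro ⟨e', he'⟩ u hue huS
      induction e' using Sym2.ind with
      | _ x y =>
        have hadj : G.Adj x y := (G.mem_edgeSet).mp he'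
        rcases Sym2.mem_iff.mp hue with rfl | rfl
        · exact ⟨y, memNS u huS y hadj, Sym2.mem_mk_right _ _⟩
        · exact ⟨x, memNS u huS x hadj.symm, Sym2.mem_mk_left _ _⟩
    -- helper: an edge of M has an endpoint in NS
    have auxM : ∀ e' : G.edgeSet, (e' : Sym2 V) ∈ M →
        ∃ v, v ∈ NS ∧ v ∈ (e' : Sym2 V) := by
      rintro ⟨e', he'⟩ heM
      induction e' using Sym2.ind with
      | _ x y =>
        have hadj : G.Adj x y := (G.mem_edgeSet).mp he'
        by_cases hxS : x ∈ S
        · exact ⟨y, memNS x hxS y hadj, Sym2.mem_mk_right _ _⟩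
        · have hxA : x ∈ A := hMA _ heM x (Sym2.mem_mk_left _ _)
          rw [hA, closedNbhd, Finset.mem_union] at hxA
          rcases hxA with h | h
          · exact absurd h hxS
          · exact ⟨x, h, Sym2.mem_mk_left _ _⟩
    simp only [closedNbhd, Finset.mem_union] at he
    rcases he with heM' | hnb
    · rw [hM', Finset.mem_filter] at heM'
      exact auxM e heM'.2
    · rw [Finset.mem_filter] at hnb
      obtain ⟨-, f, hfM', hadj⟩ := hnb
      rw [hM', Finset.mem_filter] at hfM'
      obtain ⟨hne, v, hvf, hve⟩ := SimpleGraph.lineGraph_adj_iff_exists.mp hadj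
      have hvA : v ∈ A := hMA _ hfM'.2 v hvf
      rw [hA, closedNbhd, Finset.mem_union] at hvA
      rcases hvA with hvS | hvNS
      · exact aux e v hve hvS
      · exact ⟨v, hvNS, hve⟩
  constructor
  · -- M' is stable in L(G)
    intro e heM' f hfM' hadj
    rw [hM', Finset.mem_filter] at heM' hfM'
    obtain ⟨hne, v, hve, hvf⟩ := SimpleGraph.lineGraph_adj_iff_exists.mp hadj
    have : (e : Sym2 V) ≠ (f : Sym2 V) := fun h => hne (Subtype.ext h)
    exact hM.1.1.2 e heM'.2 f hfM'.2 this v hve hvf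
  · -- maximality
    intro T hT hTsub
    have hTcard : T.card ≤ NS.card := by
      have hne : ∀ e ∈ T, ∃ v, v ∈ NS ∧ v ∈ (e : Sym2 V) := fun e he => key e (hTsub he)
      classical
      let f : G.edgeSet → V := fun e =>
        if h : ∃ v, v ∈ NS ∧ v ∈ (e : Sym2 V) then h.choose else (Quot.out (e : Sym2 V)).1
      refine Finset.card_le_card_of_injOn f ?_ ?_
      · intro e heT
        have h := hne e heT
        simp only [f, dif_pos h]
        exact h.choose_spec.1
      · intro e₁ heT e₂ hfT hef
        by_contra hne'
        have he' := hne e₁ heT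
        have hf' := hne e₂ hfT
        simp only [f, dif_pos he', dif_pos hf'] at hef
        have hve : he'.choose ∈ (e₁ : Sym2 V) := he'.choose_spec.2
        have hvf : he'.choose ∈ (e₂ : Sym2 V) := hef ▸ hf'.choose_spec.2
        exact hT e₁ heT e₂ hfT (SimpleGraph.lineGraph_adj_iff_exists.mpr
          ⟨hne', he'.choose, hve, hvf⟩)
    calc T.card ≤ NS.card := hTcard
      _ = M.card := hMNS.symm
      _ = M'.card := hM'card.symm
end

section
/- Let G be a finite simple graph, let S be a local maximum stable set of G, let H be the subgraph of G induced by N[S], and suppose H is a König–Egerváry graph. If M is a maximum matching of H, then there exists a maximum matching M₀ of G with M ⊆ M₀. -/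
open Finset
open scoped Classical

/-! Put `A = N[S]` and `B = A \ S`. As `S` is stable, every edge of `G` touching `A` has an
endpoint in `B`, so any matching of `G` has at most `|B|` edges touching `A`. The
König–Egerváry condition gives `|M| = |A| - α(G[A]) = |A| - |S| = |B|`, so replacing those edges
of a maximum matching of `G` by `M` does not decrease its size. -/

section Matching

variable {V : Type*} {G : SimpleGraph V}

theorem IsMatching.card_le_of_forall_exists_mem {M : Finset (Sym2 V)} {B : Finset V}
    (hM : IsMatching G M) (hB : ∀ e ∈ M, ∃ v ∈ B, v ∈ e) : M.card ≤ B.card :=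
  card_le_card_of_forall_subsingleton (fun e v => v ∈ e) hB fun v _ e he f hf => by
    by_contra hef
    exact hM.2 e he.1 f hf.1 hef v he.2 hf.2

theorem IsMatchingOn.union {A : Finset V} {M N : Finset (Sym2 V)} (hM : IsMatchingOn G A M)
    (hN : IsMatching G N) (hNA : ∀ e ∈ N, ∀ v ∈ e, v ∉ A) : IsMatching G (M ∪ N) := by
  refine ⟨fun e he => (mem_union.mp he).elim (hM.1.1 e) (hN.1 e), ?_⟩
  intro e he f hf hef v hve hvf
  rcases mem_union.mp he with he | he <;> rcases mem_union.mp hf with hf | hf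
  · exact hM.1.2 e he f hf hef v hve hvf
  · exact hNA f hf v hvf (hM.2 e he v hve)
  · exact hNA e he v hve (hM.2 f hf v hvf)
  · exact hN.2 e he f hf hef v hve hvf

theorem IsMatchingOn.disjoint {A : Finset V} {M N : Finset (Sym2 V)} (hM : IsMatchingOn G A M)
    (hNA : ∀ e ∈ N, ∀ v ∈ e, v ∉ A) : Disjoint M N :=
  disjoint_left.mpr fun e heM heN => hNA e heN _ e.out_fst_mem (hM.2 e heM _ e.out_fst_mem)

theorem IsMatching.filter {M : Finset (Sym2 V)} (hM : IsMatching G M) (p : Sym2 V → Prop)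
    [DecidablePred p] : IsMatching G (M.filter p) :=
  ⟨fun e he => hM.1 e (mem_filter.mp he).1,
    fun e he f hf => hM.2 e (mem_filter.mp he).1 f (mem_filter.mp hf).1⟩

variable [Fintype V]

theorem IsMaxMatchingOn.matchNumOn_eq {A : Finset V} {M : Finset (Sym2 V)}
    (hM : IsMaxMatchingOn G A M) : matchNumOn G A = M.card :=
  IsGreatest.csSup_eq ⟨⟨M, hM.1, rfl⟩, fun _ ⟨N, hN, hNn⟩ => hNn ▸ hM.2 N hN⟩

theorem exists_isMaxMatching (G : SimpleGraph V) : ∃ M, IsMaxMatching G M := by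
  obtain ⟨M, hM, hmax⟩ :=
    exists_max_image (univ.filter (IsMatching G)) card ⟨∅, by simp [IsMatching]⟩
  exact ⟨M, (mem_filter.mp hM).2, fun N hN => hmax N (by simp [hN])⟩

theorem IsMatchingOn.exists_isMaxMatching_superset {A B : Finset V} {M : Finset (Sym2 V)}
    (hM : IsMatchingOn G A M) (hB : ∀ e ∈ G.edgeSet, (∃ v ∈ A, v ∈ e) → ∃ v ∈ B, v ∈ e)
    (hcard : B.card ≤ M.card) : ∃ M₀, IsMaxMatching G M₀ ∧ M ⊆ M₀ := by
  obtain ⟨W, hW⟩ := exists_isMaxMatching G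
  set W' := W.filter fun e => ¬ ∃ v ∈ A, v ∈ e
  have hW'A : ∀ e ∈ W', ∀ v ∈ e, v ∉ A := fun e he v hv hvA =>
    (mem_filter.mp he).2 ⟨v, hvA, hv⟩
  have hWA : (W.filter fun e => ∃ v ∈ A, v ∈ e).card ≤ B.card :=
    (hW.1.filter _).card_le_of_forall_exists_mem fun e he =>
      hB e (hW.1.1 e (mem_filter.mp he).1) (mem_filter.mp he).2
  refine ⟨M ∪ W', ⟨hM.union (hW.1.filter _) hW'A, fun N hN => ?_⟩, subset_union_left⟩
  calc N.card ≤ W.card := hW.2 N hN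
    _ = (W.filter fun e => ∃ v ∈ A, v ∈ e).card + W'.card :=
      (card_filter_add_card_filter_not _).symm
    _ ≤ M.card + W'.card := by omega
    _ = (M ∪ W').card := (card_union_of_disjoint (hM.disjoint hW'A)).symm

end Matching

section ClosedNbhd

variable {V : Type*} [Fintype V] {G : SimpleGraph V} {S : Finset V}

theorem IsStableSet.exists_mem_closedNbhd_sdiff (hS : IsStableSet G S) {e : Sym2 V}
    (he : e ∈ G.edgeSet) (hA : ∃ v ∈ closedNbhd G S, v ∈ e) :
    ∃ v ∈ closedNbhd G S \ S, v ∈ e := by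
  obtain ⟨w, hwA, hwe⟩ := hA
  by_cases hwS : w ∈ S
  · obtain ⟨v, rfl⟩ := Sym2.mem_iff_exists.mp hwe
    have hwv : G.Adj w v := he
    exact ⟨v, mem_sdiff.mpr ⟨mem_closedNbhd_of_adj hwS hwv, fun hvS => hS w hwS v hvS hwv⟩,
      Sym2.mem_mk_right w v⟩
  · exact ⟨w, mem_sdiff.mpr ⟨hwA, hwS⟩, hwe⟩

theorem IsLocalMaxStableSet.stabNumOn_eq (hS : IsLocalMaxStableSet G S) :
    stabNumOn G (closedNbhd G S) = S.card :=
  IsGreatest.csSup_eq ⟨⟨S, subset_closedNbhd, hS.1, rfl⟩,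
    fun _ ⟨T, hTA, hT, hTn⟩ => hTn ▸ hS.2 T hT hTA⟩

end ClosedNbhd

/-- if `S` is a local maximum stable set of `G`, the subgraph `H` of `G`
induced by `N[S]` is a König–Egerváry graph, and `M` is a maximum matching of `H`, then `M`
extends to a maximum matching of `G`. -/
theorem maxMatching_extends_to_maxMatching {V : Type*} [Fintype V]
    (G : SimpleGraph V) (S : Finset V)
    (hS : IsLocalMaxStableSet G S)
    (hKE : IsKonigEgervaryOn G (closedNbhd G S))
    (M : Finset (Sym2 V)) (hM : IsMaxMatchingOn G (closedNbhd G S) M) :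
    ∃ M₀ : Finset (Sym2 V), IsMaxMatching G M₀ ∧ M ⊆ M₀ := by
  have hKE' : S.card + M.card = (closedNbhd G S).card := by
    rwa [IsKonigEgervaryOn, hS.stabNumOn_eq, hM.matchNumOn_eq] at hKE
  have hcard : (closedNbhd G S \ S).card ≤ M.card := by
    rw [card_sdiff_of_subset subset_closedNbhd]
    omega
  exact hM.1.exists_isMaxMatching_superset (fun _ he => hS.1.exists_mem_closedNbhd_sdiff he) hcard
end

section
/- Let G be a finite simple graph and let S be a stable set of G all of whose vertices are pendant vertices (vertices of degree exactly 1). Then S is a local maximum stable set of G. -/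
open Finset
open scoped Classical

/-- every stable set consisting of only pendant vertices (vertices of degree
exactly `1`) is a local maximum stable set. -/
theorem stable_pendant_is_localMaxStable {V : Type*} [Fintype V]
    (G : SimpleGraph V) (S : Finset V) (hS : IsStableSet G S)
    (hpend : ∀ v ∈ S, G.degree v = 1) :
    IsLocalMaxStableSet G S := by
  classical
  refine ⟨hS, fun T hT hTsub => ?_⟩
  set f : V → V := fun t => if h : ∃ u ∈ S, G.Adj u t then h.choose else t with hf
  have hfS : ∀ t, (h : ∃ u ∈ S, G.Adj u t) → f t = h.choose ∧ h.choose ∈ S ∧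
      G.Adj h.choose t := by
    intro t h
    exact ⟨dif_pos h, h.choose_spec.1, h.choose_spec.2⟩
  have hfself : ∀ t ∈ S, f t = t := by
    intro t ht
    have : ¬ ∃ u ∈ S, G.Adj u t := by
      rintro ⟨u, hu, hadj⟩
      exact hS u hu t ht hadj
    simp [hf, this]
  apply Finset.card_le_card_of_injOn f
  · intro t ht
    rcases Finset.mem_union.mp (hTsub ht) with h | h
    · rw [hfself t h]; exact h
    · rcases Finset.mem_filter.mp h with ⟨-, hex⟩
      rcases hfS t hex with ⟨heq, hmem, -⟩
      rw [heq]; exact hmem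
  · intro t1 ht1 t2 ht2 heq
    by_cases h1 : t1 ∈ S <;> by_cases h2 : t2 ∈ S
    · rwa [hfself t1 h1, hfself t2 h2] at heq
    · -- t1 ∈ S, t2 ∉ S
      exfalso
      have hex2 : ∃ u ∈ S, G.Adj u t2 := by
        rcases Finset.mem_union.mp (hTsub ht2) with h | h
        · exact absurd h h2
        · exact (Finset.mem_filter.mp h).2
      rcases hfS t2 hex2 with ⟨heq2, -, hadj2⟩
      rw [hfself t1 h1, heq2] at heq
      exact hT t1 ht1 t2 ht2 (heq ▸ hadj2)
    · exfalso
      have hex1 : ∃ u ∈ S, G.Adj u t1 := by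
        rcases Finset.mem_union.mp (hTsub ht1) with h | h
        · exact absurd h h1
        · exact (Finset.mem_filter.mp h).2
      rcases hfS t1 hex1 with ⟨heq1, -, hadj1⟩
      have : hex1.choose = t2 := by rw [← heq1, heq, hfself t2 h2]
      exact hT t2 ht2 t1 ht1 (this ▸ hadj1)
    · have hex1 : ∃ u ∈ S, G.Adj u t1 := by
        rcases Finset.mem_union.mp (hTsub ht1) with h | h
        · exact absurd h h1
        · exact (Finset.mem_filter.mp h).2
      have hex2 : ∃ u ∈ S, G.Adj u t2 := by
        rcases Finset.mem_union.mp (hTsub ht2) with h | h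
        · exact absurd h h2
        · exact (Finset.mem_filter.mp h).2
      rcases hfS t1 hex1 with ⟨heq1, hu1, hadj1⟩
      rcases hfS t2 hex2 with ⟨heq2, hu2, hadj2⟩
      rw [heq1, heq2] at heq
      -- heq : hex1.choose = hex2.choose
      have hdeg := hpend _ hu1
      rw [← SimpleGraph.card_neighborFinset_eq_degree] at hdeg
      rcases Finset.card_eq_one.mp hdeg with ⟨a, ha⟩
      have m1 : t1 ∈ G.neighborFinset hex1.choose := by
        rw [SimpleGraph.mem_neighborFinset]; exact hadj1
      have m2 : t2 ∈ G.neighborFinset hex1.choose := by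
        rw [SimpleGraph.mem_neighborFinset, heq]; exact hadj2
      rw [ha, Finset.mem_singleton] at m1 m2
      rw [m1, m2]
end
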